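/- Let m ≥ 2 be an integer with m ≡ 1 (mod 20), let f(x) = x^m on ℤ_5, let t = ν_5(m − 1), and let 𝕚 be the unique element of ℤ_5 with 𝕚² = −1 and 𝕚 − 2 ∈ 5ℤ_5. For each b ∈ {1, −1, 𝕚, −𝕚}, each integer l ≥ 0, each i ∈ {1, 2, 3, 4}, and each a ∈ {0, 1, …, 5^(t−1) − 1}, set M_{l,a,i,b} = b + 5^(l+1)·i + 5^(l+2)·a + 5^(t+l+1)ℤ_5. Then the sets M_{l,a,i,b} are pairwise disjoint clopen subsets of ℤ_5, each M_{l,a,i,b} is a minimal component of f (f(M_{l,a,i,b}) ⊆ M_{l,a,i,b} and every forward orbit of f in M_{l,a,i,b} is dense in M_{l,a,i,b}), and the union of all the M_{l,a,i,b} together with the fixed-point set {1, −1, 𝕚, −𝕚} equals the set of 5-adic units ℤ_5 \ 5ℤ_5. -/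

import Mathlib

/-!
Every unit of `ℤ_5` is congruent mod 5 to exactly one `b ∈ {±1, ±𝕚}`, and these fourth roots of
unity are fixed by `x ↦ x^m` because `4 ∣ m - 1`. If `ν_5(x - b) = l + 1`, lifting the exponent,
once for `x^K - b^K` with `K = m^d - 1` and once for `m^d - 1` itself, gives
`ν_5(x^(m^d) - x) = (l + 1) + t + ν_5(d)`.
For `d = 1` this says that `x^m` stays in the ball of radius `5^-(t+l+1)` around `x`. In general it
says that the orbit points `x^(m^n)`, `n < 5^s`, are pairwise incongruent modulo `5^(t+l+1+s)`,
so they meet all `5^s` residue classes of that ball, and the orbit is dense in it. These balls are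
the `M_{l,a,i,b}`: `b` is the residue of `x` mod 5, `l + 1 = ν_5(x - b)`, and `i + 5a` is the
residue of `(x - b) / 5^(l+1)` mod `5^t`.
-/

open Filter Topology

instance : Fact (Nat.Prime 5) := ⟨by norm_num⟩

namespace PadicInt

variable {p : ℕ} [Fact p.Prime]

theorem natCast_dvd_natCast_iff {n : ℕ} : (p : ℤ_[p]) ∣ n ↔ p ∣ n := by
  simpa [Int.natCast_dvd_natCast] using pow_p_dvd_int_iff (p := p) 1 n

theorem dvd_sub_iff_toZMod_eq {x y : ℤ_[p]} : (p : ℤ_[p]) ∣ x - y ↔ toZMod x = toZMod y := by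
  rw [← Ideal.mem_span_singleton, ← maximalIdeal_eq_span_p, ← ker_toZMod, RingHom.mem_ker,
    map_sub, sub_eq_zero]

theorem pow_dvd_sub_iff_toZModPow_eq {n : ℕ} {x y : ℤ_[p]} :
    (p : ℤ_[p]) ^ n ∣ x - y ↔ toZModPow n x = toZModPow n y := by
  rw [← Ideal.mem_span_singleton, ← ker_toZModPow, RingHom.mem_ker, map_sub, sub_eq_zero]

theorem setOf_pow_dvd_sub_eq_closedBall (c : ℤ_[p]) (n : ℕ) :
    {x : ℤ_[p] | (p : ℤ_[p]) ^ n ∣ x - c} = Metric.closedBall c ((p : ℝ) ^ (-(n : ℤ))) := by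
  ext x
  rw [Set.mem_ofPred_eq, Metric.mem_closedBall, dist_eq_norm, norm_le_pow_iff_mem_span_pow,
    Ideal.mem_span_singleton]

theorem isClopen_setOf_pow_dvd_sub (c : ℤ_[p]) (n : ℕ) :
    IsClopen {x : ℤ_[p] | (p : ℤ_[p]) ^ n ∣ x - c} := by
  rw [setOf_pow_dvd_sub_eq_closedBall]
  exact IsUltrametricDist.isClopen_closedBall c (by have := (Fact.out : p.Prime).pos; positivity)

theorem emultiplicity_pow_sub_pow (hp : Odd p) {x y : ℤ_[p]} (hxy : (p : ℤ_[p]) ∣ x - y)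
    (hx : ¬(p : ℤ_[p]) ∣ x) (n : ℕ) :
    emultiplicity (p : ℤ_[p]) (x ^ n - y ^ n) =
      emultiplicity (p : ℤ_[p]) (x - y) + emultiplicity p n := by
  rcases eq_or_ne n 0 with rfl | hn
  · simp
  obtain ⟨k, c, hc, rfl⟩ := Nat.exists_eq_pow_mul_and_not_dvd hn p (Fact.out : p.Prime).ne_one
  have hp' : Prime p := Nat.prime_iff.mp Fact.out
  have hpk : (p : ℤ_[p]) ∣ x ^ p ^ k - y ^ p ^ k := by
    rw [← geom_sum₂_mul]; exact dvd_mul_of_dvd_right hxy _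
  rw [pow_mul, pow_mul, emultiplicity_pow_sub_pow_of_prime prime_p hpk
      (fun h => hx (prime_p.dvd_of_dvd_pow h)) (by rwa [natCast_dvd_natCast_iff]),
    emultiplicity_pow_prime_pow_sub_pow_prime_pow prime_p hp hxy hx,
    emultiplicity_mul hp', emultiplicity_pow_self_of_prime hp',
    emultiplicity_eq_zero.mpr hc, add_zero]

theorem denseRange_of_pow_dvd_sub {q : ℕ → ℤ_[p]}
    (hq : ∀ s n d, (p : ℤ_[p]) ^ s ∣ q (n + d) - q n → p ^ s ∣ d) : DenseRange q := by
  rw [Metric.denseRange_iff]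
  intro y ε hε
  obtain ⟨s, hs⟩ := exists_pow_neg_lt p hε
  have hinj : Function.Injective fun n : Fin (p ^ s) => toZModPow s (q n) := by
    intro n n' h
    wlog hle : (n : ℕ) ≤ n' generalizing n n'
    · exact (this h.symm (by omega)).symm
    obtain ⟨d, hd⟩ := Nat.exists_eq_add_of_le hle
    have hdvd := hq s n d (pow_dvd_sub_iff_toZModPow_eq.mpr (hd ▸ h.symm))
    have := Nat.eq_zero_of_dvd_of_lt hdvd (by omega)
    omega
  obtain ⟨n, hn⟩ := ((Fintype.bijective_iff_injective_and_card _).mpr ⟨hinj, by simp⟩).surjective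
    (toZModPow s y)
  refine ⟨n, lt_of_le_of_lt ?_ hs⟩
  rw [← Metric.mem_closedBall, ← setOf_pow_dvd_sub_eq_closedBall]
  exact pow_dvd_sub_iff_toZModPow_eq.mpr hn.symm

theorem emultiplicity_pow_pow_sub_self (hp : Odd p) {m e : ℕ} (hm : 0 < m) (hpm : p ∣ m - 1)
    (hem : e ∣ m - 1) {b x : ℤ_[p]} (hb : b ^ e = 1) (hxb : (p : ℤ_[p]) ∣ x - b)
    (hx : ¬(p : ℤ_[p]) ∣ x) (d : ℕ) :
    emultiplicity (p : ℤ_[p]) (x ^ m ^ d - x) =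
      emultiplicity (p : ℤ_[p]) (x - b) + emultiplicity p (m - 1) + emultiplicity p d := by
  have hK : m ^ d = (m ^ d - 1) + 1 := (Nat.sub_add_cancel (Nat.one_le_pow _ _ hm)).symm
  have hbK : b ^ (m ^ d - 1) = 1 := by
    obtain ⟨k, hk⟩ := hem.trans (by simpa only [one_pow] using Nat.sub_dvd_pow_sub_pow m 1 d)
    rw [hk, pow_mul, hb, one_pow]
  have hpm' : ¬p ∣ m := fun h => (Fact.out : p.Prime).one_lt.ne'
    (Nat.dvd_one.mp ((Nat.dvd_add_right hpm).mp (by rwa [Nat.sub_add_cancel hm])))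
  have hmK : emultiplicity p (m ^ d - 1) = emultiplicity p (m - 1) + emultiplicity p d := by
    simpa using Nat.emultiplicity_pow_sub_pow Fact.out hp hpm hpm' d
  calc emultiplicity (p : ℤ_[p]) (x ^ m ^ d - x)
      = emultiplicity (p : ℤ_[p]) (x * (x ^ (m ^ d - 1) - b ^ (m ^ d - 1))) := by
        rw [hbK, mul_sub, mul_one, ← pow_succ', ← hK]
    _ = _ := by
        rw [emultiplicity_mul prime_p, emultiplicity_eq_zero.mpr hx, zero_add,
          emultiplicity_pow_sub_pow hp hxb hx, hmK, add_assoc]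

theorem setOf_pow_dvd_sub_subset_closure_range {f : ℕ → ℤ_[p]} {N : ℕ}
    (hf : ∀ n d, emultiplicity (p : ℤ_[p]) (f (n + d) - f n) = N + emultiplicity p d) :
    {y | (p : ℤ_[p]) ^ N ∣ y - f 0} ⊆ closure (Set.range f) := by
  have hball : ∀ n, (p : ℤ_[p]) ^ N ∣ f n - f 0 := fun n => by
    rw [pow_dvd_iff_le_emultiplicity, ← zero_add n, hf]; exact le_self_add
  choose q hq using hball
  have hdense : DenseRange q := denseRange_of_pow_dvd_sub fun s n d h => by
    have hf' : (p : ℤ_[p]) ^ (N + s) ∣ f (n + d) - f n := by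
      rw [show f (n + d) - f n = p ^ N * (q (n + d) - q n) by rw [mul_sub, ← hq, ← hq]; ring,
        pow_add]
      exact mul_dvd_mul_left _ h
    rw [pow_dvd_iff_le_emultiplicity, hf, Nat.cast_add] at hf'
    exact pow_dvd_iff_le_emultiplicity.mpr
      ((ENat.add_le_add_iff_left (ENat.natCast_ne_top N)).mp hf')
  rintro y ⟨z, hz⟩
  have hcont : Continuous fun w : ℤ_[p] => f 0 + p ^ N * w := by fun_prop
  have hfq : (fun w => f 0 + p ^ N * w) ∘ q = f := funext fun n => by simp [← hq]
  have := mem_closure_image hcont.continuousAt (hdense.closure_range ▸ Set.mem_univ z)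
  rwa [← Set.range_comp, hfq, ← hz, add_sub_cancel] at this

end PadicInt

namespace MonomialZ5

open PadicInt

theorem pow_four_eq_one_of_mem {R : Type*} [CommRing R] {I b : R} (hI : I ^ 2 = -1)
    (hb : b ∈ ({1, -1, I, -I} : Set R)) : b ^ 4 = 1 := by
  have hb2 : b ^ 2 = 1 ∨ b ^ 2 = -1 := by
    rcases hb with rfl | rfl | rfl | rfl <;> simp [hI]
  rcases hb2 with h | h <;> rw [show b ^ 4 = (b ^ 2) ^ 2 by ring, h] <;> norm_num

theorem prime_five : Prime (5 : ℤ_[5]) := by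
  simpa using prime_p (p := 5)

theorem not_five_dvd_of_pow_four {b : ℤ_[5]} (hb : b ^ 4 = 1) : ¬(5 : ℤ_[5]) ∣ b := fun h =>
  prime_five.not_isUnit (isUnit_of_dvd_one (hb ▸ dvd_pow h four_ne_zero))

theorem five_dvd_sub_iff {x y : ℤ_[5]} : (5 : ℤ_[5]) ∣ x - y ↔ toZMod x = toZMod y := by
  simpa using dvd_sub_iff_toZMod_eq (p := 5)

theorem toZMod_eq_two {I : ℤ_[5]} (hI5 : (5 : ℤ_[5]) ∣ I - 2) : toZMod I = 2 := by
  rwa [five_dvd_sub_iff, map_ofNat] at hI5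

theorem injOn_toZMod {I : ℤ_[5]} (hI5 : (5 : ℤ_[5]) ∣ I - 2) :
    Set.InjOn toZMod ({1, -1, I, -I} : Set ℤ_[5]) := by
  intro b hb b' hb' h
  rcases hb with rfl | rfl | rfl | rfl <;> rcases hb' with rfl | rfl | rfl | rfl <;>
    simp only [map_neg, map_one, toZMod_eq_two hI5] at h <;>
    first | rfl | exact absurd h (by decide)

theorem exists_mem_five_dvd_sub {I x : ℤ_[5]} (hI5 : (5 : ℤ_[5]) ∣ I - 2)
    (hx : ¬(5 : ℤ_[5]) ∣ x) : ∃ b ∈ ({1, -1, I, -I} : Set ℤ_[5]), (5 : ℤ_[5]) ∣ x - b := by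
  have hres : ∀ z : ZMod 5, z ≠ 0 → z = 1 ∨ z = -1 ∨ z = 2 ∨ z = -2 := by decide
  have hx0 : toZMod x ≠ 0 := by
    rwa [← sub_zero x, five_dvd_sub_iff, map_zero] at hx
  simp only [Set.mem_insert_iff, Set.mem_singleton_iff, exists_eq_or_imp, exists_eq_left,
    five_dvd_sub_iff, map_neg, map_one, toZMod_eq_two hI5]
  exact hres _ hx0

/-- `cell t l (i + 5 * a) b` is the paper's `M_{l,a,i,b} = b + 5^(l+1) (i + 5a) + 5^(t+l+1) ℤ_5`. -/
def cell (t l r : ℕ) (b : ℤ_[5]) : Set ℤ_[5] :=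
  {x | (5 : ℤ_[5]) ^ (t + l + 1) ∣ x - (b + 5 ^ (l + 1) * r)}

section Cell

variable {t l r : ℕ} {b x : ℤ_[5]}

theorem isClopen_cell : IsClopen (cell t l r b) := by
  simpa [cell] using isClopen_setOf_pow_dvd_sub (p := 5) (b + 5 ^ (l + 1) * r) (t + l + 1)

theorem mem_cell_iff_of_mem (hx : x ∈ cell t l r b) {y : ℤ_[5]} :
    y ∈ cell t l r b ↔ (5 : ℤ_[5]) ^ (t + l + 1) ∣ y - x := by
  rw [cell, Set.mem_ofPred_eq, ← sub_add_sub_cancel y x]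
  exact dvd_add_left hx

theorem five_dvd_sub_of_mem_cell (hx : x ∈ cell t l r b) : (5 : ℤ_[5]) ∣ x - b := by
  rw [show x - b = (x - (b + 5 ^ (l + 1) * r)) + 5 ^ (l + 1) * r by ring]
  exact dvd_add ((dvd_pow_self 5 (by omega)).trans hx)
    (dvd_mul_of_dvd_left (dvd_pow_self 5 (by omega)) _)

theorem not_five_dvd_of_mem_cell (hb : b ^ 4 = 1) (hx : x ∈ cell t l r b) :
    ¬(5 : ℤ_[5]) ∣ x := fun h =>
  not_five_dvd_of_pow_four hb ((dvd_sub_right h).mp (five_dvd_sub_of_mem_cell hx))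

theorem emultiplicity_sub_of_mem_cell (ht : t ≠ 0) (hr : ¬5 ∣ r) (hx : x ∈ cell t l r b) :
    emultiplicity (5 : ℤ_[5]) (x - b) = (l + 1 : ℕ) := by
  obtain ⟨w, hw⟩ := hx
  have hu : ¬(5 : ℤ_[5]) ∣ r + 5 ^ t * w := by
    rw [dvd_add_left (dvd_mul_of_dvd_left (dvd_pow_self 5 ht) w)]
    simpa using (natCast_dvd_natCast_iff (p := 5)).not.mpr hr
  rw [show x - b = 5 ^ (l + 1) * (r + 5 ^ t * w) by linear_combination hw,
    emultiplicity_mul prime_five, emultiplicity_pow_self_of_prime prime_five,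
    emultiplicity_eq_zero.mpr hu, add_zero]

end Cell

section Dynamics

variable {m t l r : ℕ} {b x : ℤ_[5]}

theorem padicValNat_sub_one_ne_zero (hm : 2 ≤ m) (h5 : 5 ∣ m - 1) :
    padicValNat 5 (m - 1) ≠ 0 :=
  Nat.one_le_iff_ne_zero.mp (one_le_padicValNat_of_dvd (by omega) (by omega))

theorem emultiplicity_pow_pow_sub_of_mem_cell (hm : 2 ≤ m) (hmod : m % 20 = 1)
    (ht : t = padicValNat 5 (m - 1)) (hr : ¬5 ∣ r) (hb : b ^ 4 = 1) (hx : x ∈ cell t l r b)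
    (d : ℕ) : emultiplicity (5 : ℤ_[5]) (x ^ m ^ d - x) = (t + l + 1 : ℕ) + emultiplicity 5 d := by
  have h := emultiplicity_pow_pow_sub_self (p := 5) (by decide) (by omega) (by omega)
    (by omega : 4 ∣ m - 1) hb (by simpa using five_dvd_sub_of_mem_cell hx)
    (by simpa using not_five_dvd_of_mem_cell hb hx) d
  rw [Nat.cast_ofNat] at h
  rw [h, emultiplicity_sub_of_mem_cell (ht ▸ padicValNat_sub_one_ne_zero hm (by omega)) hr hx,
    ← padicValNat_eq_emultiplicity (by omega), ← ht]
  push_cast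
  ring

theorem pow_mem_cell (hm : 2 ≤ m) (hmod : m % 20 = 1) (ht : t = padicValNat 5 (m - 1))
    (hr : ¬5 ∣ r) (hb : b ^ 4 = 1) (hx : x ∈ cell t l r b) : x ^ m ∈ cell t l r b := by
  have h := emultiplicity_pow_pow_sub_of_mem_cell hm hmod ht hr hb hx 1
  rw [pow_one] at h
  rw [mem_cell_iff_of_mem hx, pow_dvd_iff_le_emultiplicity, h]
  exact le_self_add

theorem pow_pow_mem_cell (hm : 2 ≤ m) (hmod : m % 20 = 1) (ht : t = padicValNat 5 (m - 1))
    (hr : ¬5 ∣ r) (hb : b ^ 4 = 1) (hx : x ∈ cell t l r b) (n : ℕ) :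
    x ^ m ^ n ∈ cell t l r b := by
  induction n with
  | zero => simpa using hx
  | succ n ih => simpa [pow_succ, pow_mul] using pow_mem_cell hm hmod ht hr hb ih

theorem cell_subset_closure_orbit (hm : 2 ≤ m) (hmod : m % 20 = 1)
    (ht : t = padicValNat 5 (m - 1)) (hr : ¬5 ∣ r) (hb : b ^ 4 = 1) (hx : x ∈ cell t l r b) :
    cell t l r b ⊆ closure (Set.range fun n : ℕ => x ^ m ^ n) := by
  intro y hy
  refine setOf_pow_dvd_sub_subset_closure_range (p := 5) (N := t + l + 1) (fun n d => ?_) ?_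
  · simpa [pow_add, pow_mul] using
      emultiplicity_pow_pow_sub_of_mem_cell hm hmod ht hr hb
        (pow_pow_mem_cell hm hmod ht hr hb hx n) d
  · simpa using (mem_cell_iff_of_mem hx).mp hy

end Dynamics

section Partition

variable {t l r : ℕ} {b I x : ℤ_[5]}

theorem eq_of_mem_cell_of_mem_cell (hI5 : (5 : ℤ_[5]) ∣ I - 2) (ht : t ≠ 0) {l' r' : ℕ}
    {b' : ℤ_[5]} (hb : b ∈ ({1, -1, I, -I} : Set ℤ_[5])) (hb' : b' ∈ ({1, -1, I, -I} : Set ℤ_[5]))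
    (hr : ¬5 ∣ r) (hr' : ¬5 ∣ r') (hrt : r < 5 ^ t) (hrt' : r' < 5 ^ t)
    (hx : x ∈ cell t l r b) (hx' : x ∈ cell t l' r' b') : l = l' ∧ r = r' ∧ b = b' := by
  obtain rfl : b = b' := injOn_toZMod hI5 hb hb'
    ((five_dvd_sub_iff.mp (five_dvd_sub_of_mem_cell hx)).symm.trans
      (five_dvd_sub_iff.mp (five_dvd_sub_of_mem_cell hx')))
  obtain rfl : l = l' := by
    have h := (emultiplicity_sub_of_mem_cell ht hr hx).symm.trans
      (emultiplicity_sub_of_mem_cell ht hr' hx')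
    exact_mod_cast Nat.succ_injective (by exact_mod_cast h)
  refine ⟨rfl, ?_, rfl⟩
  have hdiff : (5 : ℤ_[5]) ^ (l + 1) * 5 ^ t ∣ 5 ^ (l + 1) * (((r' : ℤ) - r : ℤ) : ℤ_[5]) := by
    rw [← pow_add, show l + 1 + t = t + l + 1 by ring]
    convert dvd_sub hx hx' using 1
    push_cast
    ring
  rw [mul_dvd_mul_iff_left (pow_ne_zero _ prime_five.ne_zero)] at hdiff
  have h := (pow_p_dvd_int_iff (p := 5) t ((r' : ℤ) - r)).mp (by simpa using hdiff)
  exact Nat.ModEq.eq_of_lt_of_lt (Nat.modEq_iff_dvd.mpr (by exact_mod_cast h)) hrt hrt'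

theorem exists_mem_cell (hI5 : (5 : ℤ_[5]) ∣ I - 2) (ht : t ≠ 0) (hx : ¬(5 : ℤ_[5]) ∣ x)
    (hxS : x ∉ ({1, -1, I, -I} : Set ℤ_[5])) :
    ∃ l r, r < 5 ^ t ∧ ¬5 ∣ r ∧ ∃ b ∈ ({1, -1, I, -I} : Set ℤ_[5]), x ∈ cell t l r b := by
  obtain ⟨b, hb, hxb⟩ := exists_mem_five_dvd_sub hI5 hx
  have hne : x - b ≠ 0 := sub_ne_zero.mpr fun h => hxS (h ▸ hb)
  obtain ⟨c, hc, hc5⟩ :=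
    (FiniteMultiplicity.of_prime_left prime_five hne).exists_eq_pow_mul_and_not_dvd
  obtain ⟨l, hl⟩ : ∃ l, multiplicity (5 : ℤ_[5]) (x - b) = l + 1 :=
    Nat.exists_eq_succ_of_ne_zero fun h0 => hc5 (by rwa [hc, h0, pow_zero, one_mul] at hxb)
  rw [hl] at hc
  have hcr : (5 : ℤ_[5]) ^ t ∣ c - c.appr t := by
    simpa [Ideal.mem_span_singleton] using appr_spec t c
  have hr : ¬5 ∣ c.appr t := fun h => hc5 <| by
    rw [← sub_add_cancel c (c.appr t)]
    exact dvd_add ((dvd_pow_self 5 ht).trans hcr)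
      (by simpa using (natCast_dvd_natCast_iff (p := 5)).mpr h)
  refine ⟨l, c.appr t, appr_lt c t, hr, b, hb, ?_⟩
  rw [cell, Set.mem_ofPred_eq, show x - (b + 5 ^ (l + 1) * c.appr t) = 5 ^ (l + 1) * (c - c.appr t)
    by linear_combination hc, show t + l + 1 = l + 1 + t by ring, pow_add]
  exact mul_dvd_mul_left _ hcr

theorem exists_add_five_mul_eq_iff (ht : t ≠ 0) :
    (∃ a < 5 ^ (t - 1), ∃ i, (1 ≤ i ∧ i ≤ 4) ∧ i + 5 * a = r) ↔ r < 5 ^ t ∧ ¬5 ∣ r := by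
  have h5 : 5 ^ t = 5 * 5 ^ (t - 1) := by rw [← pow_succ', Nat.sub_add_cancel (by omega)]
  constructor
  · rintro ⟨a, ha, i, hi, rfl⟩
    omega
  · rintro ⟨hr, hr5⟩
    exact ⟨r / 5, by omega, r % 5, by omega, by omega⟩

end Partition

end MonomialZ5

open MonomialZ5

/-- Minimal decomposition for `x ↦ x^m` on `ℤ_5` with `m ≡ 1 (mod 20)`:
the sets `M_{l,a,i,b} = b + 5^(l+1)i + 5^(l+2)a + 5^(t+l+1)ℤ_5`, for
`b ∈ {1, -1, 𝕚, -𝕚}`, are pairwise disjoint clopen minimal components, and together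
with `{1, -1, 𝕚, -𝕚}` they cover exactly the 5-adic units. -/
theorem monomial_Z5_one_mod_twenty_decomposition (m : ℕ) (hm : 2 ≤ m) (hmod : m % 20 = 1)
    (t : ℕ) (ht : t = padicValNat 5 (m - 1))
    (I : ℤ_[5]) (hI2 : I ^ 2 = -1) (hI5 : (5 : ℤ_[5]) ∣ I - 2)
    (M : ℕ → ℕ → ℕ → ℤ_[5] → Set ℤ_[5])
    (hM : ∀ l a i b, M l a i b =
      {x : ℤ_[5] | (5 : ℤ_[5]) ^ (t + l + 1) ∣
        x - (b + 5 ^ (l + 1) * (i : ℤ_[5]) + 5 ^ (l + 2) * (a : ℤ_[5]))}) :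
    (∀ l a i (b : ℤ_[5]) l' a' i' (b' : ℤ_[5]),
      a < 5 ^ (t - 1) → a' < 5 ^ (t - 1) → 1 ≤ i → i ≤ 4 → 1 ≤ i' → i' ≤ 4 →
      b ∈ ({1, -1, I, -I} : Set ℤ_[5]) → b' ∈ ({1, -1, I, -I} : Set ℤ_[5]) →
      (l, a, i, b) ≠ (l', a', i', b') → Disjoint (M l a i b) (M l' a' i' b')) ∧
    (∀ l a i (b : ℤ_[5]), a < 5 ^ (t - 1) → 1 ≤ i → i ≤ 4 →
      b ∈ ({1, -1, I, -I} : Set ℤ_[5]) →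
      IsClopen (M l a i b) ∧
      (∀ x ∈ M l a i b, x ^ m ∈ M l a i b) ∧
      (∀ x ∈ M l a i b, M l a i b ⊆ closure (Set.range fun n : ℕ => x ^ m ^ n))) ∧
    ((⋃ l : ℕ, ⋃ a ∈ Finset.range (5 ^ (t - 1)), ⋃ i ∈ Finset.Icc 1 4,
        ⋃ b ∈ ({1, -1, I, -I} : Set ℤ_[5]), M l a i b)
        ∪ {1, -1, I, -I} = {x : ℤ_[5] | ¬ (5 : ℤ_[5]) ∣ x}) := by
  have ht0 : t ≠ 0 := ht ▸ padicValNat_sub_one_ne_zero hm (by omega)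
  have hS : ∀ b ∈ ({1, -1, I, -I} : Set ℤ_[5]), b ^ 4 = 1 := fun b hb =>
    pow_four_eq_one_of_mem hI2 hb
  have hdig : ∀ {a i}, a < 5 ^ (t - 1) → 1 ≤ i → i ≤ 4 → i + 5 * a < 5 ^ t ∧ ¬5 ∣ i + 5 * a :=
    fun ha hi1 hi4 => (exists_add_five_mul_eq_iff ht0).mp ⟨_, ha, _, ⟨hi1, hi4⟩, rfl⟩
  obtain rfl : M = fun l a i b => cell t l (i + 5 * a) b := by
    funext l a i b
    rw [hM, cell, show b + 5 ^ (l + 1) * (i : ℤ_[5]) + 5 ^ (l + 2) * (a : ℤ_[5]) =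
      b + 5 ^ (l + 1) * ((i + 5 * a : ℕ) : ℤ_[5]) by push_cast; ring]
  refine ⟨fun l a i b l' a' i' b' ha ha' hi1 hi4 hi1' hi4' hb hb' hne => ?_,
    fun l a i b ha hi1 hi4 hb => ⟨isClopen_cell,
      fun x hx => pow_mem_cell hm hmod ht (hdig ha hi1 hi4).2 (hS b hb) hx,
      fun x hx => cell_subset_closure_orbit hm hmod ht (hdig ha hi1 hi4).2 (hS b hb) hx⟩, ?_⟩
  · refine Set.disjoint_left.mpr fun x hx hx' => hne ?_
    obtain ⟨rfl, hr, rfl⟩ := eq_of_mem_cell_of_mem_cell hI5 ht0 hb hb' (hdig ha hi1 hi4).2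
      (hdig ha' hi1' hi4').2 (hdig ha hi1 hi4).1 (hdig ha' hi1' hi4').1 hx hx'
    obtain ⟨rfl, rfl⟩ : a = a' ∧ i = i' := by omega
    rfl
  · ext x
    simp only [Set.mem_union, Set.mem_iUnion, Finset.mem_range, Finset.mem_Icc, exists_prop,
      Set.mem_ofPred_eq]
    refine ⟨?_, fun hx => or_iff_not_imp_right.mpr fun hxS => ?_⟩
    · rintro (⟨l, a, -, i, -, b, hb, hx⟩ | hx)
      exacts [not_five_dvd_of_mem_cell (hS b hb) hx, not_five_dvd_of_pow_four (hS x hx)]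
    · obtain ⟨l, r, hrt, hr, b, hb, hxc⟩ := exists_mem_cell hI5 ht0 hx hxS
      obtain ⟨a, ha, i, hi, rfl⟩ := (exists_add_five_mul_eq_iff ht0).mpr ⟨hrt, hr⟩
      exact ⟨l, a, ha, i, hi, b, hb, hxc⟩
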